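/- arXiv:1102.4595 — 4 statements merged into one kernel-verified Lean document; each statement's English description precedes it below -/
import Mathlib

section
/- If vectors $v_1,\ldots,v_n$ in a finite-dimensional Euclidean space all lie in a common open half-space (i.e., there is a linear functional positive on all of them) and the angles between them are pairwise non-acute (pairwise inner products are $\le 0$), then $v_1,\ldots,v_n$ are linearly independent. -/
/-!
Split a vanishing combination `∑ gᵢ vᵢ = 0` into positive and negative parts: the vector
`w = ∑ gᵢ⁺ vᵢ = ∑ gᵢ⁻ vᵢ` has `⟪w, w⟫ = ∑ gᵢ⁺ gⱼ⁻ ⟪vᵢ, vⱼ⟫ ≤ 0`, because the supports of `g⁺` and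
`g⁻` are disjoint, so `w = 0`. Applying the functional `f` to `∑ gᵢ⁺ vᵢ = 0` and to
`∑ gᵢ⁻ vᵢ = 0` then forces `g⁺ = g⁻ = 0`.
-/

open scoped InnerProductSpace

lemma Real.posPart_mul_negPart (a : ℝ) : a⁺ * a⁻ = 0 := by
  rcases le_total a 0 with h | h
  · rw [posPart_eq_zero.2 h, zero_mul]
  · rw [negPart_eq_zero.2 h, mul_zero]

section

variable {ι V : Type*} [NormedAddCommGroup V] [InnerProductSpace ℝ V]

lemma inner_sum_smul_sum_smul_nonpos_of_pairwise_inner_nonpos {s : Finset ι} {v : ι → V}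
    (hv : ∀ i ∈ s, ∀ j ∈ s, i ≠ j → ⟪v i, v j⟫_ℝ ≤ 0) {a b : ι → ℝ}
    (ha : ∀ i ∈ s, 0 ≤ a i) (hb : ∀ i ∈ s, 0 ≤ b i) (hab : ∀ i ∈ s, a i * b i = 0) :
    ⟪∑ i ∈ s, a i • v i, ∑ j ∈ s, b j • v j⟫_ℝ ≤ 0 := by
  rw [sum_inner]
  refine Finset.sum_nonpos fun i hi => ?_
  rw [inner_sum]
  refine Finset.sum_nonpos fun j hj => ?_
  rw [real_inner_smul_left, real_inner_smul_right, ← mul_assoc]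
  rcases eq_or_ne i j with rfl | hij
  · rw [hab i hi, zero_mul]
  · exact mul_nonpos_of_nonneg_of_nonpos (mul_nonneg (ha i hi) (hb j hj)) (hv i hi j hj hij)

end

lemma eq_zero_of_sum_smul_eq_zero_of_map_pos {ι M : Type*} [AddCommMonoid M] [Module ℝ M]
    {s : Finset ι} {v : ι → M} (f : M →ₗ[ℝ] ℝ) (hf : ∀ i ∈ s, 0 < f (v i)) {a : ι → ℝ}
    (ha : ∀ i ∈ s, 0 ≤ a i) (hsum : ∑ i ∈ s, a i • v i = 0) : ∀ i ∈ s, a i = 0 := by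
  have hfsum : ∑ i ∈ s, a i * f (v i) = 0 := by
    simpa only [map_sum, map_smul, smul_eq_mul, map_zero] using congrArg f hsum
  intro i hi
  have hterm := (Finset.sum_eq_zero_iff_of_nonneg fun j hj =>
    mul_nonneg (ha j hj) (hf j hj).le).1 hfsum i hi
  exact (mul_eq_zero.1 hterm).resolve_right (hf i hi).ne'

theorem vectors_in_halfspace_pairwise_nonacute_linearIndependent_general
    {V : Type} [NormedAddCommGroup V] [InnerProductSpace ℝ V]
    {n : ℕ} (v : Fin n → V) (f : V →ₗ[ℝ] ℝ) (hf : ∀ i, 0 < f (v i))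
    (hangle : ∀ i j, i ≠ j → ⟪v i, v j⟫_ℝ ≤ 0) :
    LinearIndependent ℝ v := by
  rw [linearIndependent_iff']
  intro s g hg
  have hparts : ∑ i ∈ s, (g i)⁺ • v i = ∑ i ∈ s, (g i)⁻ • v i := by
    rw [← sub_eq_zero, ← Finset.sum_sub_distrib, ← hg]
    simp only [← sub_smul, posPart_sub_negPart]
  have hzero : ∑ i ∈ s, (g i)⁺ • v i = 0 := by
    refine real_inner_self_nonpos.1 ?_
    nth_rw 2 [hparts]
    exact inner_sum_smul_sum_smul_nonpos_of_pairwise_inner_nonpos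
      (fun i _ j _ => hangle i j) (fun i _ => posPart_nonneg _) (fun i _ => negPart_nonneg _)
      (fun i _ => Real.posPart_mul_negPart _)
  have hpos := eq_zero_of_sum_smul_eq_zero_of_map_pos f (fun i _ => hf i)
    (fun i _ => posPart_nonneg _) hzero
  have hneg := eq_zero_of_sum_smul_eq_zero_of_map_pos f (fun i _ => hf i)
    (fun i _ => negPart_nonneg _) (hparts ▸ hzero)
  intro i hi
  rw [← posPart_sub_negPart (g i), hpos i hi, hneg i hi, sub_zero]

/-- If vectors `v 1, …, v n` of a finite-dimensional Euclidean space lie in a common open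
half-space (there is a linear functional positive on all of them) and the angles between
them are pairwise non-acute (pairwise inner products are `≤ 0`), then they are linearly
independent. -/
theorem vectors_in_halfspace_pairwise_nonacute_linearIndependent
    {V : Type} [NormedAddCommGroup V] [InnerProductSpace ℝ V] [FiniteDimensional ℝ V]
    {n : ℕ} (v : Fin n → V) (f : V →ₗ[ℝ] ℝ) (hf : ∀ i, 0 < f (v i))
    (hangle : ∀ i j, i ≠ j → ⟪v i, v j⟫_ℝ ≤ 0) :
    LinearIndependent ℝ v :=
  vectors_in_halfspace_pairwise_nonacute_linearIndependent_general v f hf hangle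
end

section
/- Let $\Delta$ be a root system of type $A$, $D$, or $E$ (all roots of the same length), with positive roots $\Delta_+$ relative to a base $\Pi$. For $\alpha \in \Delta_+$, let $s(\alpha)$ denote the number of unordered representations of $\alpha$ as a sum of two positive roots. Then $s(\alpha) = \mathrm{ht}(\alpha) - 1$, where $\mathrm{ht}(\alpha)$ is the height of $\alpha$ (the sum of its coefficients over simple roots). -/
open scoped InnerProductSpace

/-- A reduced crystallographic root system in a Euclidean space `V`, together with a chosen
base of simple roots and the (integer) coordinates of each root in this base. -/
structure RootSystemData (V : Type) [NormedAddCommGroup V] [InnerProductSpace ℝ V] where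
  /-- the set of roots -/
  roots : Set V
  /-- the set of simple roots (the base) -/
  simples : Finset V
  finite : roots.Finite
  ne_zero : ∀ α ∈ roots, α ≠ (0 : V)
  neg_mem : ∀ α ∈ roots, -α ∈ roots
  reduced : ∀ α ∈ roots, (2 : ℝ) • α ∉ roots
  reflect_mem : ∀ α ∈ roots, ∀ β ∈ roots,
    β - (2 * ⟪α, β⟫_ℝ / ⟪α, α⟫_ℝ) • α ∈ roots
  cartan_int : ∀ α ∈ roots, ∀ β ∈ roots, ∃ n : ℤ,
    2 * ⟪α, β⟫_ℝ / ⟪α, α⟫_ℝ = (n : ℝ)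
  simples_mem : ∀ γ ∈ simples, γ ∈ roots
  simples_indep : LinearIndependent ℝ (fun γ : simples => (γ : V))
  /-- `coeff α γ` is the coefficient of the simple root `γ` in the root `α` -/
  coeff : V → V → ℤ
  coeff_spec : ∀ α ∈ roots, α = ∑ γ ∈ simples, coeff α γ • γ
  coeff_sign : ∀ α ∈ roots,
    (∀ γ ∈ simples, 0 ≤ coeff α γ) ∨ (∀ γ ∈ simples, coeff α γ ≤ 0)

namespace RootSystemData

variable {V : Type} [NormedAddCommGroup V] [InnerProductSpace ℝ V]

/-- The set of positive roots with respect to the base. -/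
def pos (R : RootSystemData V) : Set V :=
  {α ∈ R.roots | ∀ γ ∈ R.simples, 0 ≤ R.coeff α γ}

/-- The support of a root: the simple roots occurring in it with nonzero coefficient. -/
def Supp (R : RootSystemData V) (α : V) : Finset V :=
  R.simples.filter fun γ => R.coeff α γ ≠ 0

/-- The height of a root: the sum of its coefficients over the simple roots. -/
def height (R : RootSystemData V) (α : V) : ℤ :=
  ∑ γ ∈ R.simples, R.coeff α γ

/-- `s(α)`: the number of unordered representations of `α` as a sum of two positive
roots. -/
noncomputable def numDecomp (R : RootSystemData V) (α : V) : ℕ :=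
  {z : Sym2 V | ∃ β ∈ R.pos, ∃ γ ∈ R.pos, z = Sym2.mk β γ ∧ β + γ = α}.ncard

end RootSystemData


/-!
If all roots have squared length `c`, the Cartan integer of two roots `β ≠ ±α` is `-1`, `0` or
`1`. Sum `⟪β, α⟫` over the positive roots `β`. The reflection `s_α` permutes the positive roots
`β ≠ α` for which `α - β` is not positive and negates `⟪β, α⟫`, so these cancel; what is left
is `β = α`, contributing `c`, and the summands `β` of the decompositions `α = β + (α - β)`, each
contributing `c / 2`. A simple root has no such decomposition, so its sum is `c`, and by
linearity the sum for `α` is `c · ht α`. Hence there are `2 ht α - 2` summands, and they come in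
pairs `{β, α - β}`.
-/

open Finset

theorem Finset.two_mul_card_image_sym2Mk {α : Type*} [DecidableEq α] {s : Finset α}
    {σ : α → α} (hσ : ∀ x ∈ s, σ x ∈ s) (hinv : ∀ x ∈ s, σ (σ x) = x)
    (hfix : ∀ x ∈ s, σ x ≠ x) : 2 * #(s.image fun x => s(x, σ x)) = #s := by
  rw [card_eq_sum_card_image (fun x => s(x, σ x)) s, mul_comm, ← smul_eq_mul, ← sum_const]
  refine sum_congr rfl fun z hz => ?_
  obtain ⟨x, hx, rfl⟩ := mem_image.1 hz
  have hfiber : {y ∈ s | s(y, σ y) = s(x, σ x)} = {x, σ x} := by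
    ext y
    simp only [mem_filter, mem_insert, mem_singleton, Sym2.eq_iff]
    constructor
    · rintro ⟨-, ⟨rfl, -⟩ | ⟨rfl, -⟩⟩ <;> simp
    · rintro (rfl | rfl)
      · exact ⟨hx, .inl ⟨rfl, rfl⟩⟩
      · exact ⟨hσ x hx, .inr ⟨rfl, hinv x hx⟩⟩
  rw [hfiber, card_pair (hfix x hx).symm]

namespace RootSystemData

variable {V : Type} [NormedAddCommGroup V] [InnerProductSpace ℝ V]

noncomputable def reflect (γ β : V) : V := β - (2 * ⟪γ, β⟫_ℝ / ⟪γ, γ⟫_ℝ) • γ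

theorem reflect_eq_sub_smul {β γ : V} {k : ℝ} (hγ : γ ≠ 0)
    (h : 2 * ⟪β, γ⟫_ℝ = k * ⟪γ, γ⟫_ℝ) : reflect γ β = β - k • γ := by
  rw [reflect, real_inner_comm, h, mul_div_cancel_right₀ _ (inner_self_ne_zero.2 hγ)]

theorem inner_reflect_self {γ : V} (hγ : γ ≠ 0) (β : V) :
    ⟪reflect γ β, γ⟫_ℝ = -⟪β, γ⟫_ℝ := by
  have : ⟪γ, γ⟫_ℝ ≠ 0 := inner_self_ne_zero.2 hγ
  rw [reflect, inner_sub_left, real_inner_smul_left, real_inner_comm γ β]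
  field_simp
  ring

theorem reflect_reflect {γ : V} (hγ : γ ≠ 0) (β : V) : reflect γ (reflect γ β) = β := by
  have h : 2 * ⟪reflect γ β, γ⟫_ℝ = -(2 * ⟪β, γ⟫_ℝ / ⟪γ, γ⟫_ℝ) * ⟪γ, γ⟫_ℝ := by
    rw [inner_reflect_self hγ, mul_neg, neg_mul, div_mul_cancel₀ _ (inner_self_ne_zero.2 hγ)]
  rw [reflect_eq_sub_smul hγ h, reflect, real_inner_comm, neg_smul, sub_neg_eq_add, sub_add_cancel]

theorem sum_inner_eq_zero_of_reflect_mem {s : Finset V} {γ : V} (hγ : γ ≠ 0)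
    (hs : ∀ β ∈ s, reflect γ β ∈ s) : ∑ β ∈ s, ⟪β, γ⟫_ℝ = 0 := by
  have h : ∑ β ∈ s, ⟪reflect γ β, γ⟫_ℝ = ∑ β ∈ s, ⟪β, γ⟫_ℝ :=
    sum_nbij' (reflect γ) (reflect γ) hs hs (fun β _ => reflect_reflect hγ β)
      (fun β _ => reflect_reflect hγ β) fun _ _ => rfl
  simp only [inner_reflect_self hγ, sum_neg_distrib] at h
  linarith

open scoped Classical

variable (R : RootSystemData V)

theorem pos_finite : R.pos.Finite := R.finite.subset fun _ h => h.1

noncomputable def posFinset : Finset V := R.pos_finite.toFinset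

@[simp]
theorem mem_posFinset {β : V} : β ∈ R.posFinset ↔ β ∈ R.pos := Set.Finite.mem_toFinset _

noncomputable def summands (α : V) : Finset V := {β ∈ R.posFinset | α - β ∈ R.pos}

theorem mem_summands {α β : V} : β ∈ R.summands α ↔ β ∈ R.pos ∧ α - β ∈ R.pos := by
  simp [summands]

theorem coeff_eq_of_eq_sum {α : V} (hα : α ∈ R.roots) {d : V → ℤ}
    (h : α = ∑ γ ∈ R.simples, d γ • γ) : ∀ γ ∈ R.simples, R.coeff α γ = d γ := by
  have key := Fintype.linearIndependent_iffₛ.mp R.simples_indep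
    (fun γ => (R.coeff α γ : ℝ)) (fun γ => (d γ : ℝ)) (by
      simp only [Int.cast_smul_eq_zsmul]
      rw [sum_coe_sort R.simples (fun γ => R.coeff α γ • γ),
        sum_coe_sort R.simples (fun γ => d γ • γ), ← R.coeff_spec α hα, ← h])
  exact fun γ hγ => by exact_mod_cast key ⟨γ, hγ⟩

theorem coeff_neg {α : V} (hα : α ∈ R.roots) :
    ∀ γ ∈ R.simples, R.coeff (-α) γ = -R.coeff α γ :=
  R.coeff_eq_of_eq_sum (R.neg_mem α hα) <| by
    simp only [neg_smul, sum_neg_distrib, ← R.coeff_spec α hα]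

theorem coeff_add {β γ : V} (hβ : β ∈ R.roots) (hγ : γ ∈ R.roots) (h : β + γ ∈ R.roots) :
    ∀ δ ∈ R.simples, R.coeff (β + γ) δ = R.coeff β δ + R.coeff γ δ :=
  R.coeff_eq_of_eq_sum h <| by
    simp only [add_smul, sum_add_distrib, ← R.coeff_spec β hβ, ← R.coeff_spec γ hγ]

theorem coeff_simple {γ : V} (hγ : γ ∈ R.simples) :
    ∀ δ ∈ R.simples, R.coeff γ δ = if δ = γ then 1 else 0 :=
  R.coeff_eq_of_eq_sum (R.simples_mem γ hγ) <| by simp [ite_smul, hγ]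

theorem height_neg {α : V} (hα : α ∈ R.roots) : R.height (-α) = -R.height α := by
  rw [height, sum_congr rfl (R.coeff_neg hα), sum_neg_distrib, height]

theorem height_add {β γ : V} (hβ : β ∈ R.roots) (hγ : γ ∈ R.roots) (h : β + γ ∈ R.roots) :
    R.height (β + γ) = R.height β + R.height γ := by
  rw [height, sum_congr rfl (R.coeff_add hβ hγ h), sum_add_distrib, height, height]

theorem height_simple {γ : V} (hγ : γ ∈ R.simples) : R.height γ = 1 := by
  rw [height, sum_congr rfl (R.coeff_simple hγ), sum_ite_eq', if_pos hγ]

theorem one_le_height {α : V} (hα : α ∈ R.pos) : 1 ≤ R.height α := by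
  by_contra! h
  have h0 : ∀ γ ∈ R.simples, R.coeff α γ = 0 :=
    (sum_eq_zero_iff_of_nonneg hα.2).1 <|
      le_antisymm (by rw [height] at h; omega) (sum_nonneg hα.2)
  apply R.ne_zero α hα.1
  rw [R.coeff_spec α hα.1]
  exact sum_eq_zero fun γ hγ => by rw [h0 γ hγ, zero_smul]

theorem simple_mem_pos {γ : V} (hγ : γ ∈ R.simples) : γ ∈ R.pos :=
  ⟨R.simples_mem γ hγ, fun δ hδ => by rw [R.coeff_simple hγ δ hδ]; split_ifs <;> omega⟩

theorem neg_notMem_pos {α : V} (hα : α ∈ R.pos) : -α ∉ R.pos := fun h => by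
  have := R.one_le_height h
  rw [R.height_neg hα.1] at this
  linarith [R.one_le_height hα]

theorem mem_pos_or_neg_mem_pos {α : V} (hα : α ∈ R.roots) : α ∈ R.pos ∨ -α ∈ R.pos := by
  rcases R.coeff_sign α hα with h | h
  · exact .inl ⟨hα, h⟩
  · exact .inr ⟨R.neg_mem α hα, fun γ hγ => by rw [R.coeff_neg hα γ hγ]; linarith [h γ hγ]⟩

theorem add_mem_pos {β γ : V} (hβ : β ∈ R.pos) (hγ : γ ∈ R.pos) (h : β + γ ∈ R.roots) :
    β + γ ∈ R.pos :=
  ⟨h, fun δ hδ => by rw [R.coeff_add hβ.1 hγ.1 h δ hδ]; linarith [hβ.2 δ hδ, hγ.2 δ hδ]⟩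

theorem summands_eq_empty_of_mem_simples {γ : V} (hγ : γ ∈ R.simples) : R.summands γ = ∅ := by
  refine eq_empty_of_forall_notMem fun β hβ => ?_
  obtain ⟨hβ, hγβ⟩ := R.mem_summands.1 hβ
  have h := R.height_add hβ.1 hγβ.1 (by rw [add_sub_cancel]; exact R.simples_mem γ hγ)
  rw [add_sub_cancel, R.height_simple hγ] at h
  linarith [R.one_le_height hβ, R.one_le_height hγβ]

theorem two_mul_numDecomp {α : V} (hα : α ∈ R.roots) : 2 * R.numDecomp α = #(R.summands α) := by
  have hset : {z : Sym2 V | ∃ β ∈ R.pos, ∃ γ ∈ R.pos, z = s(β, γ) ∧ β + γ = α}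
      = ↑((R.summands α).image fun β => s(β, α - β)) := by
    ext z
    simp only [Set.mem_ofPred_eq, coe_image, Set.mem_image, mem_coe, mem_summands]
    constructor
    · rintro ⟨β, hβ, γ, hγ, rfl, rfl⟩
      exact ⟨β, ⟨hβ, by rwa [add_sub_cancel_left]⟩, by rw [add_sub_cancel_left]⟩
    · rintro ⟨β, ⟨hβ, hαβ⟩, rfl⟩
      exact ⟨β, hβ, α - β, hαβ, rfl, add_sub_cancel β α⟩
  rw [numDecomp, hset, Set.ncard_coe_finset]
  refine two_mul_card_image_sym2Mk (fun β hβ => ?_) (fun β _ => sub_sub_cancel α β)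
    fun β hβ h => ?_
  · rw [mem_summands, sub_sub_cancel]
    exact (R.mem_summands.1 hβ).symm
  · refine R.reduced β (R.mem_summands.1 hβ).1.1 ?_
    rwa [two_smul, ← sub_eq_iff_eq_add.1 h]

section SimplyLaced

variable {R} {c : ℝ} (hc : ∀ β ∈ R.roots, ⟪β, β⟫_ℝ = c)
include hc

theorem two_mul_inner_of_add_mem {β γ : V} (hβ : β ∈ R.roots) (hγ : γ ∈ R.roots)
    (h : β + γ ∈ R.roots) : 2 * ⟪β, γ⟫_ℝ = -c := by
  have hsum := hc _ h
  rw [real_inner_add_add_self, hc β hβ, hc γ hγ] at hsum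
  linarith

theorem inner_trichotomy {β γ : V} (hβ : β ∈ R.roots) (hγ : γ ∈ R.roots) (h₁ : β ≠ γ)
    (h₂ : β ≠ -γ) : 2 * ⟪β, γ⟫_ℝ = -c ∨ ⟪β, γ⟫_ℝ = 0 ∨ 2 * ⟪β, γ⟫_ℝ = c := by
  obtain ⟨n, hn⟩ := R.cartan_int γ hγ β hβ
  have hc0 : 0 < c := hc γ hγ ▸ real_inner_self_pos.2 (R.ne_zero γ hγ)
  rw [hc γ hγ, real_inner_comm, div_eq_iff hc0.ne'] at hn
  -- `‖β ∓ γ‖² > 0` gives `|⟪β, γ⟫| < c`, hence `|n| < 2`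
  have hsub := real_inner_self_pos.2 (sub_ne_zero.2 h₁)
  have hadd := real_inner_self_pos.2 fun h => h₂ (eq_neg_of_add_eq_zero_left h)
  rw [real_inner_sub_sub_self, hc β hβ, hc γ hγ] at hsub
  rw [real_inner_add_add_self, hc β hβ, hc γ hγ] at hadd
  have hlt : n < 2 := by exact_mod_cast (show (n : ℝ) < 2 by nlinarith)
  have hgt : -2 < n := by exact_mod_cast (show (-2 : ℝ) < n by nlinarith)
  rcases (by omega : n = -1 ∨ n = 0 ∨ n = 1) with rfl | rfl | rfl
  · left; push_cast at hn; linarith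
  · right; left; push_cast at hn; linarith
  · right; right; push_cast at hn; linarith

theorem reflect_mem_pos_of_sub_notMem_pos {α β : V} (hα : α ∈ R.pos) (hβ : β ∈ R.pos)
    (hne : β ≠ α) (hαβ : α - β ∉ R.pos) :
    reflect α β ∈ R.pos ∧ reflect α β ≠ α ∧ α - reflect α β ∉ R.pos := by
  have hα0 := R.ne_zero α hα.1
  have hroot : reflect α β ∈ R.roots := R.reflect_mem α hα.1 β hβ.1
  rcases inner_trichotomy hc hβ.1 hα.1 hne fun h => R.neg_notMem_pos hα (h ▸ hβ)
    with h | h | h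
  · rw [reflect_eq_sub_smul hα0 (k := -1) (by rw [hc α hα.1]; linarith)] at hroot ⊢
    simp only [neg_smul, one_smul, sub_neg_eq_add] at hroot ⊢
    refine ⟨R.add_mem_pos hβ hα hroot, fun h' => R.ne_zero β hβ.1 (by simpa using h'), ?_⟩
    rw [sub_add_cancel_right]
    exact R.neg_notMem_pos hβ
  · rw [reflect_eq_sub_smul hα0 (k := 0) (by simp [h])]
    simpa using ⟨hβ, hne, hαβ⟩
  · rw [reflect_eq_sub_smul hα0 (k := 1) (by rw [hc α hα.1]; linarith), one_smul] at hroot ⊢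
    refine ⟨(R.mem_pos_or_neg_mem_pos hroot).resolve_right (by rwa [neg_sub]),
      fun h' => R.reduced α hα.1 ?_, fun h' => ?_⟩
    · rw [two_smul, ← sub_eq_iff_eq_add.1 h']
      exact hβ.1
    · -- `2α - β` would be a root of squared length `3c`
      have hlen := hc _ h'.1
      have e : ⟪α - (β - α), α - (β - α)⟫_ℝ = 4 * ⟪α, α⟫_ℝ - 4 * ⟪β, α⟫_ℝ + ⟪β, β⟫_ℝ := by
        simp only [inner_sub_left, inner_sub_right, real_inner_comm α β]
        ring
      rw [e, hc α hα.1, hc β hβ.1] at hlen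
      have hc0 : 0 < c := hc α hα.1 ▸ real_inner_self_pos.2 hα0
      linarith

theorem sum_inner_posFinset_eq_add_card_summands {α : V} (hα : α ∈ R.pos) :
    ∑ β ∈ R.posFinset, ⟪β, α⟫_ℝ = c + c / 2 * #(R.summands α) := by
  have hαE : α ∈ {β ∈ R.posFinset | α - β ∉ R.pos} := by
    have h0 : (0 : V) ∉ R.pos := fun h => R.ne_zero 0 h.1 rfl
    simp [hα, h0]
  have hE : ∑ β ∈ {β ∈ R.posFinset | α - β ∉ R.pos}.erase α, ⟪β, α⟫_ℝ = 0 := by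
    refine sum_inner_eq_zero_of_reflect_mem (R.ne_zero α hα.1) fun β hβ => ?_
    simp only [mem_erase, mem_filter, mem_posFinset] at hβ ⊢
    obtain ⟨h₁, h₂, h₃⟩ := reflect_mem_pos_of_sub_notMem_pos hc hα hβ.2.1 hβ.1 hβ.2.2
    exact ⟨h₂, h₁, h₃⟩
  have hD : ∑ β ∈ R.summands α, ⟪β, α⟫_ℝ = c / 2 * #(R.summands α) := by
    rw [sum_congr rfl fun β hβ => ?_, sum_const, nsmul_eq_mul, mul_comm]
    obtain ⟨hβ, hαβ⟩ := R.mem_summands.1 hβ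
    have h := two_mul_inner_of_add_mem hc hβ.1 hαβ.1 ((add_sub_cancel β α).symm ▸ hα.1)
    rw [← add_sub_cancel β α, inner_add_right, hc β hβ.1]
    linarith
  rw [← sum_filter_add_sum_filter_not R.posFinset (fun β => α - β ∈ R.pos),
    show {β ∈ R.posFinset | α - β ∈ R.pos} = R.summands α from rfl, hD,
    ← add_sum_erase _ _ hαE, hE, hc α hα.1]
  ring

theorem sum_inner_posFinset_eq_mul_height {α : V} (hα : α ∈ R.roots) :
    ∑ β ∈ R.posFinset, ⟪β, α⟫_ℝ = c * R.height α := by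
  have hsimple : ∀ γ ∈ R.simples, ∑ β ∈ R.posFinset, ⟪β, γ⟫_ℝ = c := fun γ hγ => by
    rw [sum_inner_posFinset_eq_add_card_summands hc (R.simple_mem_pos hγ),
      R.summands_eq_empty_of_mem_simples hγ, card_empty]
    simp
  conv_lhs => rw [R.coeff_spec α hα]
  simp_rw [inner_sum, ← Int.cast_smul_eq_zsmul ℝ, real_inner_smul_right]
  rw [sum_comm, height, Int.cast_sum, mul_sum]
  refine sum_congr rfl fun γ hγ => ?_
  rw [← mul_sum, hsimple γ hγ, mul_comm]

theorem card_summands {α : V} (hα : α ∈ R.pos) :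
    (#(R.summands α) : ℤ) = 2 * R.height α - 2 := by
  have hc0 : c ≠ 0 := (hc α hα.1 ▸ real_inner_self_pos.2 (R.ne_zero α hα.1)).ne'
  have h := (sum_inner_posFinset_eq_add_card_summands hc hα).symm.trans
    (sum_inner_posFinset_eq_mul_height hc hα.1)
  have : (#(R.summands α) : ℝ) = 2 * R.height α - 2 := by
    apply mul_left_cancel₀ hc0
    linarith
  exact_mod_cast this

end SimplyLaced

end RootSystemData

/-- In a root system of type `A`, `D` or `E` (i.e. all roots have the same length), the
number `s(α)` of unordered representations of a positive root `α` as a sum of two positive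
roots equals `ht(α) - 1`. -/
theorem numDecomp_eq_height_sub_one_of_simplyLaced
    {V : Type} [NormedAddCommGroup V] [InnerProductSpace ℝ V]
    (R : RootSystemData V)
    (hADE : ∀ α ∈ R.roots, ∀ β ∈ R.roots, ‖α‖ = ‖β‖) :
    ∀ α ∈ R.pos, (R.numDecomp α : ℤ) = R.height α - 1 := by
  intro α hα
  have hc : ∀ β ∈ R.roots, ⟪β, β⟫_ℝ = ⟪α, α⟫_ℝ := fun β hβ => by
    rw [real_inner_self_eq_norm_sq, real_inner_self_eq_norm_sq, hADE β hβ α hα.1]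
  have hdecomp := R.two_mul_numDecomp hα.1
  have hcard := RootSystemData.card_summands hc hα
  omega
end

section
/- Let $H$ be a connected solvable spherical subgroup of $G$ standardly embedded in $B$, and let $\Psi = \{\alpha \in \Delta_+ \mid \mathfrak{g}_\alpha \not\subset \mathfrak{n}\}$ be its set of active roots. If $\alpha, \beta \in \Psi$ and $\gamma = \beta - \alpha \in \Delta_+$, then $\gamma \notin \Psi$. -/
open scoped InnerProductSpace

/-- The Lie-theoretic data attached to a connected solvable subgroup `H = S ⋉ N` of a
connected semisimple complex algebraic group `G`, standardly embedded in a Borel subgroup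
`B = T ⋉ U`:
* the root system of `G` with respect to `T`, with the base determined by `B`;
* the restriction map `τ : 𝔛(T) ⊗ ℚ → 𝔛(S) ⊗ ℚ` of characters from `T` to the maximal
  torus `S = H ∩ T` of `H` (modelled as a linear map of vector spaces, `W = 𝔛(S) ⊗ ℚ`);
* the nilpotent Lie algebra `L = 𝔲` of the maximal unipotent subgroup `U`, with its root
  space decomposition `𝔲 = ⨁_{α ∈ Δ₊} 𝔤_α`;
* the Lie algebra `𝔫 ⊆ 𝔲` of the unipotent radical `N = H ∩ U` of `H`, which is a
  subalgebra and is a sum of its `S`-weight components. -/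
structure SphericalSetup (V : Type) [NormedAddCommGroup V] [InnerProductSpace ℝ V]
    (W : Type) [AddCommGroup W] [Module ℝ W]
    (L : Type) [LieRing L] [LieAlgebra ℂ L] extends RootSystemData V where
  /-- restriction of characters from `T` to `S` -/
  τ : V →ₗ[ℝ] W
  /-- the root spaces `𝔤_α ⊆ 𝔲` -/
  g : V → Submodule ℂ L
  g_dim : ∀ α ∈ toRootSystemData.pos, Module.finrank ℂ (g α) = 1
  g_bot : ∀ α, α ∉ toRootSystemData.pos → g α = ⊥
  g_top : (⨆ α ∈ toRootSystemData.pos, g α) = (⊤ : Submodule ℂ L)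
  bracket_mem : ∀ (α β : V), ∀ x ∈ g α, ∀ y ∈ g β, ⁅x, y⁆ ∈ g (α + β)
  bracket_ne : ∀ α ∈ toRootSystemData.pos, ∀ β ∈ toRootSystemData.pos,
    α + β ∈ toRootSystemData.pos → ∃ x ∈ g α, ∃ y ∈ g β, ⁅x, y⁆ ≠ (0 : L)
  /-- the Lie algebra `𝔫` of the unipotent radical `N` of `H` -/
  n : Submodule ℂ L
  n_bracket : ∀ x ∈ n, ∀ y ∈ n, ⁅x, y⁆ ∈ n
  n_weight : n = ⨆ w : W, n ⊓ ⨆ α ∈ {a ∈ toRootSystemData.pos | τ a = w}, g α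

namespace SphericalSetup

variable {V : Type} [NormedAddCommGroup V] [InnerProductSpace ℝ V]
  {W : Type} [AddCommGroup W] [Module ℝ W]
  {L : Type} [LieRing L] [LieAlgebra ℂ L]

/-- The `S`-weight subspace `𝔲_w ⊆ 𝔲` of weight `w`. -/
def uSp (S : SphericalSetup V W L) (w : W) : Submodule ℂ L :=
  ⨆ α ∈ {a ∈ S.pos | S.τ a = w}, S.g α

/-- `c_w`: the codimension of `𝔫_w = 𝔫 ∩ 𝔲_w` in `𝔲_w`. -/
noncomputable def c (S : SphericalSetup V W L) (w : W) : ℕ :=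
  Module.finrank ℂ (S.uSp w) - Module.finrank ℂ ↥(S.n ⊓ S.uSp w)

/-- The sphericity of `H` in `G`, via the criterion of Theorem `solvable_spherical`:
`c_w ≤ 1` for every weight `w`, and the weights `w` with `c_w = 1` are linearly
independent in `𝔛(S) ⊗ ℚ`. -/
def Spherical (S : SphericalSetup V W L) : Prop :=
  (∀ w : W, S.c w ≤ 1) ∧
    LinearIndependent ℝ (fun w : {w : W // S.c w = 1} => (w : W))

/-- The set `Ψ` of active roots: positive roots `α` with `𝔤_α ⊄ 𝔫`. -/
def active (S : SphericalSetup V W L) : Set V :=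
  {α ∈ S.pos | ¬ S.g α ≤ S.n}

/-- The family `F(α)` of active roots generated by an active root `α`: the root `α`
together with all active roots subordinate to it. -/
def family (S : SphericalSetup V W L) (α : V) : Set V :=
  insert α {β ∈ S.active | α - β ∈ S.pos}

end SphericalSetup

/-! An active root `δ` has `𝔤_δ ⊄ 𝔫`, so `c_{τ δ} ≥ 1`, hence `c_{τ δ} = 1` by sphericity.
If `α`, `β` and `β - α` were all active, then `τ α + τ (β - α) = τ β` would be a linear
relation among weights with `c = 1`, which sphericity forbids. -/

theorem LinearIndependent.add_ne {ι R M : Type*} [Ring R] [Nontrivial R] [AddCommGroup M]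
    [Module R M] {v : ι → M} (hv : LinearIndependent R v) (i j k : ι) : v i + v j ≠ v k := by
  intro h
  by_cases hik : i = k
  · subst hik
    exact hv.ne_zero j (by simpa using h)
  by_cases hjk : j = k
  · subst hjk
    exact hv.ne_zero i (by simpa using h)
  refine hv.notMem_span_image (s := {i, j}) (x := k) (by simp [Ne.symm hik, Ne.symm hjk]) ?_
  rw [← h, Set.image_pair]
  exact Submodule.add_mem _ (Submodule.subset_span (by simp)) (Submodule.subset_span (by simp))

namespace SphericalSetup

variable {V : Type} [NormedAddCommGroup V] [InnerProductSpace ℝ V]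
  {W : Type} [AddCommGroup W] [Module ℝ W]
  {L : Type} [LieRing L] [LieAlgebra ℂ L]

theorem g_le_uSp (S : SphericalSetup V W L) {δ : V} (hδ : δ ∈ S.pos) :
    S.g δ ≤ S.uSp (S.τ δ) :=
  le_iSup₂_of_le δ ⟨hδ, rfl⟩ le_rfl

theorem c_pos_of_mem_active [FiniteDimensional ℂ L] (S : SphericalSetup V W L) {δ : V}
    (hδ : δ ∈ S.active) : 0 < S.c (S.τ δ) := by
  have hlt : S.n ⊓ S.uSp (S.τ δ) < S.uSp (S.τ δ) :=
    inf_le_right.lt_of_ne fun h => hδ.2 ((S.g_le_uSp hδ.1).trans (inf_eq_right.mp h))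
  have := Submodule.finrank_lt_finrank_of_lt hlt
  unfold c
  omega

theorem Spherical.c_eq_one_of_mem_active [FiniteDimensional ℂ L] {S : SphericalSetup V W L}
    (hS : S.Spherical) {δ : V} (hδ : δ ∈ S.active) : S.c (S.τ δ) = 1 :=
  le_antisymm (hS.1 _) (S.c_pos_of_mem_active hδ)

end SphericalSetup

theorem sub_of_active_not_active_general
    {V : Type} [NormedAddCommGroup V] [InnerProductSpace ℝ V]
    {W : Type} [AddCommGroup W] [Module ℝ W]
    {L : Type} [LieRing L] [LieAlgebra ℂ L] [FiniteDimensional ℂ L]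
    (S : SphericalSetup V W L) (hS : S.Spherical)
    {α β : V} (hα : α ∈ S.active) (hβ : β ∈ S.active) :
    β - α ∉ S.active := by
  intro hγ
  have hweights := hS.2.add_ne ⟨_, hS.c_eq_one_of_mem_active hα⟩
    ⟨_, hS.c_eq_one_of_mem_active hγ⟩ ⟨_, hS.c_eq_one_of_mem_active hβ⟩
  exact hweights (by simp)

/-- Let `H` be a connected solvable spherical subgroup of `G` standardly embedded in `B`,
with set of active roots `Ψ`.  If `α, β ∈ Ψ` and `γ = β - α` is a positive root, then
`γ ∉ Ψ`. -/
theorem sub_of_active_not_active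
    {V : Type} [NormedAddCommGroup V] [InnerProductSpace ℝ V]
    {W : Type} [AddCommGroup W] [Module ℝ W]
    {L : Type} [LieRing L] [LieAlgebra ℂ L] [FiniteDimensional ℂ L]
    (S : SphericalSetup V W L) (hS : S.Spherical)
    {α β : V} (hα : α ∈ S.active) (hβ : β ∈ S.active) (hγ : β - α ∈ S.pos) :
    β - α ∉ S.active :=
  sub_of_active_not_active_general S hS hα hβ
end

section
/- In the root system of type $B_n$ ($n \ge 2$), with simple roots $\alpha_1,\ldots,\alpha_n$ ($\alpha_n$ short), the positive roots $\alpha$ with full support satisfying $s(\alpha) = n - 1$, where $s(\alpha)$ is the number of unordered decompositions of $\alpha$ as a sum of two positive roots, are exactly $\alpha_1+\alpha_2+\cdots+\alpha_n$ and $\alpha_1+\alpha_2+\cdots+\alpha_{n-1}+2\alpha_n$. -/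
/-- The positive roots of the root system of type `B n` (`n ≥ 2`), written in coordinates
with respect to the standard simple roots `α₁, …, αₙ` (`αₙ` short):
* `e_i - e_j = α_i + ⋯ + α_{j-1}` and `e_i = α_i + ⋯ + α_n`, i.e. the indicator of an
  interval `[i, j]`;
* `e_i + e_j = α_i + ⋯ + α_{j-1} + 2α_j + ⋯ + 2α_n` (`i < j`), i.e. `1` on `[i, j-1]`
  and `2` on `[j, n]`. -/
def typeBPos (n : ℕ) : Set (Fin n → ℤ) :=
  {v | (∃ i j : Fin n, i ≤ j ∧ v = fun k => if i ≤ k ∧ k ≤ j then 1 else 0) ∨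
       (∃ i j : Fin n, i < j ∧ v = fun k => if k < i then 0 else if k < j then 1 else 2)}

/-- `s(α)`: the number of unordered representations of `α` as a sum of two positive roots
of `B n`. -/
noncomputable def typeBNumDecomp (n : ℕ) (α : Fin n → ℤ) : ℕ :=
  {z : Sym2 (Fin n → ℤ) | ∃ β ∈ typeBPos n, ∃ γ ∈ typeBPos n,
    z = Sym2.mk β γ ∧ β + γ = α}.ncard

/-!
Since `α₁` occurs in `α` with coefficient one, in every decomposition `α = β + γ` exactly one
summand contains `α₁`, so `s(α)` is the number of positive roots `β` containing `α₁` for which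
`α - β` is again a positive root. These `β` are `α₁ + ⋯ + α_m` and `e₁ + e_j`. The roots of full
support are `α₁ + ⋯ + αₙ = e₁` and `e₁ + e_j` (`2 ≤ j ≤ n`). For `e₁` the first family contributes
`n - 1` roots and the second none; for `e₁ + e_j` they contribute `n - 1` and `n - j`, so
`s(e₁ + e_j) = 2n - 1 - j`, which is `n - 1` only for `e₁ + eₙ = α₁ + ⋯ + α_{n-1} + 2αₙ`.
-/

lemma ncard_sym2_decomp_eq_ncard {ι : Type*} {P : Set (ι → ℤ)} {i : ι}
    (hP : ∀ v ∈ P, 0 ≤ v i) {α : ι → ℤ} (hα : α i = 1) :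
    {z : Sym2 (ι → ℤ) | ∃ β ∈ P, ∃ γ ∈ P, z = s(β, γ) ∧ β + γ = α}.ncard =
      {β ∈ P | β i = 1 ∧ α - β ∈ P}.ncard := by
  have himage : {z : Sym2 (ι → ℤ) | ∃ β ∈ P, ∃ γ ∈ P, z = s(β, γ) ∧ β + γ = α} =
      (fun β => s(β, α - β)) '' {β ∈ P | β i = 1 ∧ α - β ∈ P} := by
    ext z
    constructor
    · rintro ⟨β, hβ, γ, hγ, rfl, rfl⟩
      have hβi := hP β hβ
      have hγi := hP γ hγ
      rw [Pi.add_apply] at hα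
      rcases (show β i = 1 ∨ γ i = 1 by omega) with h | h
      · exact ⟨β, ⟨hβ, h, by simpa⟩, by simp⟩
      · exact ⟨γ, ⟨hγ, h, by simpa⟩, by simp [Sym2.eq_swap]⟩
    · rintro ⟨β, ⟨hβ, -, hαβ⟩, rfl⟩
      exact ⟨β, hβ, α - β, hαβ, rfl, add_sub_cancel β α⟩
  rw [himage, Set.InjOn.ncard_image]
  rintro β ⟨-, hβ, -⟩ β' ⟨-, hβ', -⟩ h
  rcases Sym2.eq_iff.1 h with ⟨h, -⟩ | ⟨h, -⟩
  · exact h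
  · have := congrFun h i
    simp only [Pi.sub_apply] at this
    omega

-- Indices are 0-based: `intervalVec n a b` is `e_{a+1} - e_{b+2}` (`e_{a+1}` if `b = n - 1`)
-- and `stairVec n a b` is `e_{a+1} + e_{b+1}`.
def intervalVec (n a b : ℕ) : Fin n → ℤ :=
  fun k => if a ≤ (k : ℕ) ∧ (k : ℕ) ≤ b then 1 else 0

def stairVec (n a b : ℕ) : Fin n → ℤ :=
  fun k => if (k : ℕ) < a then 0 else if (k : ℕ) < b then 1 else 2

section TypeBRoots

variable {n : ℕ}

@[simp]
lemma intervalVec_mk (a b k : ℕ) (hk : k < n) :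
    intervalVec n a b ⟨k, hk⟩ = if a ≤ k ∧ k ≤ b then 1 else 0 := rfl

@[simp]
lemma stairVec_mk (a b k : ℕ) (hk : k < n) :
    stairVec n a b ⟨k, hk⟩ = if k < a then 0 else if k < b then 1 else 2 := rfl

lemma mem_typeBPos_iff {v : Fin n → ℤ} :
    v ∈ typeBPos n ↔ (∃ a b, a ≤ b ∧ b < n ∧ v = intervalVec n a b) ∨
      (∃ a b, a < b ∧ b < n ∧ v = stairVec n a b) := by
  constructor
  · rintro (⟨i, j, hij, rfl⟩ | ⟨i, j, hij, rfl⟩)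
    · exact Or.inl ⟨i, j, hij, j.isLt, rfl⟩
    · exact Or.inr ⟨i, j, hij, j.isLt, rfl⟩
  · rintro (⟨a, b, hab, hb, rfl⟩ | ⟨a, b, hab, hb, rfl⟩)
    · exact Or.inl ⟨⟨a, by omega⟩, ⟨b, hb⟩, hab, rfl⟩
    · exact Or.inr ⟨⟨a, by omega⟩, ⟨b, hb⟩, hab, rfl⟩

lemma intervalVec_mem_typeBPos {a b : ℕ} (hab : a ≤ b) (hb : b < n) :
    intervalVec n a b ∈ typeBPos n :=
  mem_typeBPos_iff.2 (Or.inl ⟨a, b, hab, hb, rfl⟩)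

lemma stairVec_mem_typeBPos {a b : ℕ} (hab : a < b) (hb : b < n) :
    stairVec n a b ∈ typeBPos n :=
  mem_typeBPos_iff.2 (Or.inr ⟨a, b, hab, hb, rfl⟩)

lemma nonneg_of_mem_typeBPos {v : Fin n → ℤ} (hv : v ∈ typeBPos n) (k : Fin n) : 0 ≤ v k := by
  obtain ⟨k, hk⟩ := k
  rcases mem_typeBPos_iff.1 hv with ⟨a, b, -, -, rfl⟩ | ⟨a, b, -, -, rfl⟩ <;>
    · simp only [intervalVec_mk, stairVec_mk]
      split_ifs <;> omega

lemma exists_eq_one_of_mem_typeBPos {v : Fin n → ℤ} (hv : v ∈ typeBPos n) : ∃ k, v k = 1 := by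
  rcases mem_typeBPos_iff.1 hv with ⟨a, b, hab, hb, rfl⟩ | ⟨a, b, hab, hb, rfl⟩
  · exact ⟨⟨a, by omega⟩, by simp [hab]⟩
  · exact ⟨⟨a, by omega⟩, by simp [hab]⟩

lemma mem_typeBPos_and_apply_zero_eq_one_iff (hn : 0 < n) {v : Fin n → ℤ} :
    v ∈ typeBPos n ∧ v ⟨0, hn⟩ = 1 ↔
      (∃ m < n, v = intervalVec n 0 m) ∨ (∃ m, 0 < m ∧ m < n ∧ v = stairVec n 0 m) := by
  constructor
  · rintro ⟨hv, h0⟩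
    rcases mem_typeBPos_iff.1 hv with ⟨a, b, hab, hb, rfl⟩ | ⟨a, b, hab, hb, rfl⟩ <;>
      simp only [intervalVec_mk, stairVec_mk] at h0
    · exact Or.inl ⟨b, hb, by rw [show a = 0 by split_ifs at h0 <;> omega]⟩
    · exact Or.inr ⟨b, by omega, hb, by rw [show a = 0 by split_ifs at h0 <;> omega]⟩
  · rintro (⟨m, hm, rfl⟩ | ⟨m, hm0, hm, rfl⟩)
    · exact ⟨intervalVec_mem_typeBPos (Nat.zero_le m) hm, by simp⟩
    · exact ⟨stairVec_mem_typeBPos hm0 hm, by simp [hm0]⟩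

lemma intervalVec_zero_injOn : Set.InjOn (intervalVec n 0) {m | m < n} := by
  intro m hm m' hm' h
  have hm := congrFun h ⟨m, hm⟩
  have hm' := congrFun h ⟨m', hm'⟩
  simp only [intervalVec_mk] at hm hm'
  split_ifs at hm hm' <;> omega

lemma stairVec_zero_injOn : Set.InjOn (stairVec n 0) {m | m < n} := by
  intro m hm m' hm' h
  have hm := congrFun h ⟨m, hm⟩
  have hm' := congrFun h ⟨m', hm'⟩
  simp only [stairVec_mk] at hm hm'
  split_ifs at hm hm' <;> omega

lemma intervalVec_ne_stairVec {a b c d : ℕ} (hcd : c < d) (hd : d < n) :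
    intervalVec n a b ≠ stairVec n c d := by
  intro h
  have := congrFun h ⟨n - 1, by omega⟩
  simp only [intervalVec_mk, stairVec_mk] at this
  split_ifs at this <;> omega

lemma typeBNumDecomp_eq_ncard_add_ncard (hn : 0 < n) {α : Fin n → ℤ} (hα : α ⟨0, hn⟩ = 1) :
    typeBNumDecomp n α =
      {m | m < n ∧ α - intervalVec n 0 m ∈ typeBPos n}.ncard +
        {m | 0 < m ∧ m < n ∧ α - stairVec n 0 m ∈ typeBPos n}.ncard := by
  set A := {m | m < n ∧ α - intervalVec n 0 m ∈ typeBPos n}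
  set B := {m | 0 < m ∧ m < n ∧ α - stairVec n 0 m ∈ typeBPos n}
  have hsplit : {β ∈ typeBPos n | β ⟨0, hn⟩ = 1 ∧ α - β ∈ typeBPos n} =
      intervalVec n 0 '' A ∪ stairVec n 0 '' B := by
    ext β
    constructor
    · rintro ⟨hβ, h0, hαβ⟩
      rcases (mem_typeBPos_and_apply_zero_eq_one_iff hn).1 ⟨hβ, h0⟩ with
        ⟨m, hm, rfl⟩ | ⟨m, hm0, hm, rfl⟩
      · exact Or.inl ⟨m, ⟨hm, hαβ⟩, rfl⟩
      · exact Or.inr ⟨m, ⟨hm0, hm, hαβ⟩, rfl⟩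
    · rintro (⟨m, ⟨hm, hαβ⟩, rfl⟩ | ⟨m, ⟨hm0, hm, hαβ⟩, rfl⟩)
      · obtain ⟨hβ, h0⟩ := (mem_typeBPos_and_apply_zero_eq_one_iff hn).2 (Or.inl ⟨m, hm, rfl⟩)
        exact ⟨hβ, h0, hαβ⟩
      · obtain ⟨hβ, h0⟩ :=
          (mem_typeBPos_and_apply_zero_eq_one_iff hn).2 (Or.inr ⟨m, hm0, hm, rfl⟩)
        exact ⟨hβ, h0, hαβ⟩
  have hdisj : Disjoint (intervalVec n 0 '' A) (stairVec n 0 '' B) := by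
    rw [Set.disjoint_left]
    rintro _ ⟨m, -, rfl⟩ ⟨m', hm', h⟩
    exact intervalVec_ne_stairVec hm'.1 hm'.2.1 h.symm
  have hA : A.Finite := (Set.finite_lt_nat n).subset fun m hm => hm.1
  have hB : B.Finite := (Set.finite_lt_nat n).subset fun m hm => hm.2.1
  unfold typeBNumDecomp
  rw [ncard_sym2_decomp_eq_ncard (fun v hv => nonneg_of_mem_typeBPos hv _) hα, hsplit,
    Set.ncard_union_eq hdisj (hA.image _) (hB.image _),
    (intervalVec_zero_injOn.mono fun m hm => hm.1).ncard_image,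
    (stairVec_zero_injOn.mono fun m hm => hm.2.1).ncard_image]

lemma intervalVec_sub_intervalVec_mem_iff {m : ℕ} (hm : m < n) :
    intervalVec n 0 (n - 1) - intervalVec n 0 m ∈ typeBPos n ↔ m + 1 < n := by
  constructor
  · intro h
    by_contra hmn
    obtain ⟨⟨k, hk⟩, hk1⟩ := exists_eq_one_of_mem_typeBPos h
    simp only [Pi.sub_apply, intervalVec_mk] at hk1
    split_ifs at hk1 <;> omega
  · intro hmn
    convert intervalVec_mem_typeBPos (show m + 1 ≤ n - 1 by omega) (show n - 1 < n by omega) using 1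
    funext ⟨k, hk⟩
    simp only [Pi.sub_apply, intervalVec_mk]
    split_ifs <;> omega

lemma intervalVec_sub_stairVec_notMem (m : ℕ) :
    intervalVec n 0 (n - 1) - stairVec n 0 m ∉ typeBPos n := by
  intro h
  obtain ⟨⟨k, hk⟩, hk1⟩ := exists_eq_one_of_mem_typeBPos h
  simp only [Pi.sub_apply, intervalVec_mk, stairVec_mk] at hk1
  split_ifs at hk1 <;> omega

lemma stairVec_sub_intervalVec_mem_iff {b m : ℕ} (hb : 0 < b) (hbn : b < n) (hm : m < n) :
    stairVec n 0 b - intervalVec n 0 m ∈ typeBPos n ↔ m + 1 ≠ b := by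
  constructor
  · rintro h rfl
    obtain ⟨⟨k, hk⟩, hk1⟩ := exists_eq_one_of_mem_typeBPos h
    simp only [Pi.sub_apply, intervalVec_mk, stairVec_mk] at hk1
    split_ifs at hk1 <;> omega
  · intro hmb
    rcases lt_or_gt_of_ne hmb with hmb | hmb
    · convert stairVec_mem_typeBPos hmb hbn using 1
      funext ⟨k, hk⟩
      simp only [Pi.sub_apply, intervalVec_mk, stairVec_mk]
      split_ifs <;> omega
    · rcases lt_or_eq_of_le (show m + 1 ≤ n by omega) with hmn | hmn
      · convert stairVec_mem_typeBPos (show b < m + 1 by omega) hmn using 1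
        funext ⟨k, hk⟩
        simp only [Pi.sub_apply, intervalVec_mk, stairVec_mk]
        split_ifs <;> omega
      · convert intervalVec_mem_typeBPos (show b ≤ m by omega) hm using 1
        funext ⟨k, hk⟩
        simp only [Pi.sub_apply, intervalVec_mk, stairVec_mk]
        split_ifs <;> omega

lemma stairVec_sub_stairVec_mem_iff {b m : ℕ} (hm : m < n) :
    stairVec n 0 b - stairVec n 0 m ∈ typeBPos n ↔ b < m := by
  constructor
  · intro h
    by_contra hmb
    obtain ⟨⟨k, hk⟩, hk1⟩ := exists_eq_one_of_mem_typeBPos h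
    simp only [Pi.sub_apply, stairVec_mk] at hk1
    split_ifs at hk1 <;> omega
  · intro hbm
    convert intervalVec_mem_typeBPos (show b ≤ m - 1 by omega) (show m - 1 < n by omega) using 1
    funext ⟨k, hk⟩
    simp only [Pi.sub_apply, intervalVec_mk, stairVec_mk]
    split_ifs <;> omega

lemma typeBNumDecomp_intervalVec (hn : 0 < n) :
    typeBNumDecomp n (intervalVec n 0 (n - 1)) = n - 1 := by
  have hA : {m | m < n ∧ intervalVec n 0 (n - 1) - intervalVec n 0 m ∈ typeBPos n} =
      Set.Iio (n - 1) := by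
    ext m
    simp only [Set.mem_Iio]
    constructor
    · rintro ⟨hm, h⟩
      have := (intervalVec_sub_intervalVec_mem_iff hm).1 h
      omega
    · intro hm
      exact ⟨by omega, (intervalVec_sub_intervalVec_mem_iff (by omega)).2 (by omega)⟩
  have hB : {m | 0 < m ∧ m < n ∧ intervalVec n 0 (n - 1) - stairVec n 0 m ∈ typeBPos n} = ∅ :=
    Set.eq_empty_of_forall_notMem fun m hm => intervalVec_sub_stairVec_notMem m hm.2.2
  rw [typeBNumDecomp_eq_ncard_add_ncard hn (by simp), hA, hB, Set.ncard_Iio_nat,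
    Set.ncard_empty, add_zero]

lemma typeBNumDecomp_stairVec {b : ℕ} (hb : 0 < b) (hbn : b < n) :
    typeBNumDecomp n (stairVec n 0 b) = 2 * n - 2 - b := by
  have hA : {m | m < n ∧ stairVec n 0 b - intervalVec n 0 m ∈ typeBPos n} =
      Set.Iio n \ {b - 1} := by
    ext m
    simp only [Set.mem_sdiff, Set.mem_Iio, Set.mem_singleton_iff]
    constructor
    · rintro ⟨hm, h⟩
      exact ⟨hm, by have := (stairVec_sub_intervalVec_mem_iff hb hbn hm).1 h; omega⟩
    · rintro ⟨hm, hmb⟩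
      exact ⟨hm, (stairVec_sub_intervalVec_mem_iff hb hbn hm).2 (by omega)⟩
  have hB : {m | 0 < m ∧ m < n ∧ stairVec n 0 b - stairVec n 0 m ∈ typeBPos n} =
      Set.Ioo b n := by
    ext m
    simp only [Set.mem_Ioo]
    constructor
    · rintro ⟨-, hm, h⟩
      exact ⟨(stairVec_sub_stairVec_mem_iff hm).1 h, hm⟩
    · rintro ⟨hbm, hm⟩
      exact ⟨by omega, hm, (stairVec_sub_stairVec_mem_iff hm).2 hbm⟩
  rw [typeBNumDecomp_eq_ncard_add_ncard (by omega) (by simp [hb]), hA, hB,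
    Set.ncard_sdiff_singleton_of_mem (Set.mem_Iio.2 (by omega)), Set.ncard_Iio_nat,
    Set.ncard_Ioo_nat]
  omega

lemma mem_typeBPos_and_pos_iff (hn : 0 < n) {v : Fin n → ℤ} :
    v ∈ typeBPos n ∧ (∀ k, 0 < v k) ↔
      v = intervalVec n 0 (n - 1) ∨ ∃ b, 0 < b ∧ b < n ∧ v = stairVec n 0 b := by
  constructor
  · rintro ⟨hv, hpos⟩
    have hfirst := hpos ⟨0, hn⟩
    have hlast := hpos ⟨n - 1, by omega⟩
    rcases mem_typeBPos_iff.1 hv with ⟨a, b, hab, hb, rfl⟩ | ⟨a, b, hab, hb, rfl⟩ <;>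
      simp only [intervalVec_mk, stairVec_mk] at hfirst hlast
    · left
      obtain ⟨rfl, rfl⟩ : a = 0 ∧ b = n - 1 := by split_ifs at hfirst hlast <;> omega
      rfl
    · obtain rfl : a = 0 := by split_ifs at hfirst <;> omega
      exact Or.inr ⟨b, hab, hb, rfl⟩
  · rintro (rfl | ⟨b, hb, hbn, rfl⟩)
    · refine ⟨intervalVec_mem_typeBPos (Nat.zero_le _) (by omega), fun ⟨k, hk⟩ => ?_⟩
      simp only [intervalVec_mk]
      split_ifs <;> omega
    · refine ⟨stairVec_mem_typeBPos hb hbn, fun ⟨k, hk⟩ => ?_⟩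
      simp only [stairVec_mk]
      split_ifs <;> omega

end TypeBRoots

/-- In the root system of type `B n` (`n ≥ 2`), the positive roots `α` with full support
satisfying `s(α) = n - 1` are exactly `α₁ + α₂ + ⋯ + αₙ` and
`α₁ + α₂ + ⋯ + α_{n-1} + 2αₙ`. -/
theorem typeB_fullSupport_numDecomp_eq :
    ∀ n : ℕ, 2 ≤ n →
      {v | v ∈ typeBPos n ∧ (∀ k, 0 < v k) ∧ typeBNumDecomp n v = n - 1} =
        ({fun _ => 1, fun k : Fin n => if (k : ℕ) = n - 1 then 2 else 1} : Set (Fin n → ℤ)) := by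
  intro n hn
  have hones : (fun _ => 1 : Fin n → ℤ) = intervalVec n 0 (n - 1) := by
    funext ⟨k, hk⟩
    simp only [intervalVec_mk]
    split_ifs <;> omega
  have hlast : (fun k : Fin n => if (k : ℕ) = n - 1 then (2 : ℤ) else 1) =
      stairVec n 0 (n - 1) := by
    funext ⟨k, hk⟩
    simp only [stairVec_mk]
    split_ifs <;> omega
  rw [hones, hlast]
  ext v
  rw [Set.mem_ofPred_eq, ← and_assoc, mem_typeBPos_and_pos_iff (by omega), Set.mem_insert_iff,
    Set.mem_singleton_iff]
  constructor
  · rintro ⟨rfl | ⟨b, hb, hbn, rfl⟩, hs⟩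
    · exact Or.inl rfl
    · rw [typeBNumDecomp_stairVec hb hbn] at hs
      exact Or.inr (by rw [show b = n - 1 by omega])
  · rintro (rfl | rfl)
    · exact ⟨Or.inl rfl, typeBNumDecomp_intervalVec (by omega)⟩
    · refine ⟨Or.inr ⟨n - 1, by omega, by omega, rfl⟩, ?_⟩
      rw [typeBNumDecomp_stairVec (by omega) (by omega)]
      omega
end
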